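/- Let Ω be a countably infinite set and let u, v, t, f ∈ Ω^Ω. If k(u) = k(f) = ∞, c(v) = ∞, d(v) < ∞, c(t) > 0, and d(t) = 0, then f belongs to the subsemigroup of Ω^Ω generated by S_{1,2,3,4,5} ∪ {u, v, t}. -/

import Mathlib

/-!
Setting: `Ω` is a countably infinite set, `Function.End Ω = Ω → Ω` is the full
transformation semigroup (a subset is closed under composition in one order iff
it is closed in the other, so the lattice of subsemigroups is unaffected by the
left-to-right convention of the paper).
-/

open Cardinal

/-- A transversal of `f`: a set on which `f` is injective and whose image is all of `Ωf`. -/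
def IsTransversal {Ω : Type*} (f : Ω → Ω) (T : Set Ω) : Prop :=
  Set.InjOn f T ∧ f '' T = Set.range f

/-- The defect `d(f) = |Ω \ Ωf|`. -/
noncomputable def defect {Ω : Type*} (f : Ω → Ω) : Cardinal :=
  #((Set.range f)ᶜ : Set Ω)

/-- The collapse `c(f) = |Ω \ Σ|` for a transversal `Σ` of `f` (the value is
independent of the choice of transversal, so the infimum is the common value). -/
noncomputable def collapse {Ω : Type*} (f : Ω → Ω) : Cardinal :=
  ⨅ T : {T : Set Ω // IsTransversal f T}, #(T.1ᶜ : Set Ω)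

/-- The infinite contraction index `k(f) = |{α : αf⁻¹ infinite}|`. -/
noncomputable def contract {Ω : Type*} (f : Ω → Ω) : Cardinal :=
  #({α : Ω | (f ⁻¹' {α}).Infinite} : Set Ω)

def S1 {Ω : Type*} : Set (Function.End Ω) := {f | collapse f = 0 ∨ 0 < defect f}
def S2 {Ω : Type*} : Set (Function.End Ω) := {f | 0 < collapse f ∨ defect f = 0}
def S3 {Ω : Type*} : Set (Function.End Ω) := {f | collapse f < ℵ₀ ∨ ℵ₀ ≤ defect f}
def S4 {Ω : Type*} : Set (Function.End Ω) := {f | ℵ₀ ≤ collapse f ∨ defect f < ℵ₀}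
def S5 {Ω : Type*} : Set (Function.End Ω) := {f | contract f < ℵ₀}

/-- `Sym(Ω)`, the bijections of `Ω`. -/
def SymOmega {Ω : Type*} : Set (Function.End Ω) := {f | Function.Bijective f}

/-- `U = {f : d(f) = ∞ or 0 < c(f) < ∞} ∪ Sym(Ω)`. -/
def SetU {Ω : Type*} : Set (Function.End Ω) :=
  {f | ℵ₀ ≤ defect f ∨ (0 < collapse f ∧ collapse f < ℵ₀)} ∪ SymOmega

/-- `V = {f : c(f) = ∞ or 0 < d(f) < ∞} ∪ Sym(Ω)`. -/
def SetV {Ω : Type*} : Set (Function.End Ω) :=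
  {f | ℵ₀ ≤ collapse f ∨ (0 < defect f ∧ defect f < ℵ₀)} ∪ SymOmega

/-- `S_{1,2,3,4,5}`. -/
def S12345 {Ω : Type*} : Set (Function.End Ω) := S1 ∩ S2 ∩ S3 ∩ S4 ∩ S5

/-- The family `S_1, …, S_5` indexed by `Fin 5`. -/
def SS {Ω : Type*} : Fin 5 → Set (Function.End Ω) := ![S1, S2, S3, S4, S5]


/-!
Since `u` has infinitely many infinite fibres, `w ∘ f = a ∘ u ∘ b` whenever `w` is injective on
`Ωf` and `Ω \ w(Ωf)` is infinite: `a` is a permutation, and `b` sends each fibre of `f`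
injectively into its own infinite fibre of `u`, except for one infinite fibre of `f`, which it
collapses to a point; so `c(b) = d(b) = ∞` and `k(b) ≤ 1`, whence `b ∈ S_{1,2,3,4,5}`. Taking
`w = id` settles `d(f) = ∞`. If `0 < d(f) < ∞`, let `σ` map `Ωf` onto a transversal of `v` minus
one point; then `f = m ∘ v ∘ (σ ∘ f)`, where `m` inverts `v ∘ σ` on `Ωf` and has finite positive
collapse and defect, so `m ∈ S_{1,2,3,4,5}`. A surjective `f` is `t ∘ (s ∘ f)` for a section `s`
of `t`, and `d(s ∘ f) ≥ c(t) > 0`.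
-/

variable {Ω : Type*}

theorem aleph0_le_mk_iff_infinite {S : Set Ω} : ℵ₀ ≤ #S ↔ S.Infinite :=
  Cardinal.aleph0_le_mk_iff.trans Set.infinite_coe_iff

theorem Set.Infinite.mk_eq_aleph0 [Countable Ω] {S : Set Ω} (hS : S.Infinite) : #S = ℵ₀ :=
  have := hS.to_subtype
  Cardinal.mk_eq_aleph0 S

theorem mem_S12345_iff {g : Function.End Ω} :
    g ∈ S12345 ↔ contract g < ℵ₀ ∧ (collapse g = 0 ↔ defect g = 0) ∧
      (collapse g < ℵ₀ ↔ defect g < ℵ₀) := by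
  simp only [S12345, S1, S2, S3, S4, S5, Set.mem_inter_iff, Set.mem_ofPred_eq,
    pos_iff_ne_zero, ← not_lt (b := ℵ₀)]
  tauto

theorem subsingleton_preimage_inter_of_injOn {g : Ω → Ω} {T : Set Ω} (hg : Set.InjOn g T)
    (α : Ω) : (g ⁻¹' {α} ∩ T).Subsingleton := fun _ hx _ hy =>
  hg hx.2 hy.2 (hx.1.trans hy.1.symm)

theorem exists_isTransversal (g : Ω → Ω) : ∃ T, IsTransversal g T := by
  obtain ⟨T, hT, hinj⟩ := Set.exists_image_eq_and_injOn Set.univ g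
  exact ⟨T, hinj, hT.trans Set.image_univ⟩

theorem IsTransversal.collapse_le {g : Ω → Ω} {T : Set Ω} (hT : IsTransversal g T) :
    collapse g ≤ #(Tᶜ : Set Ω) :=
  ciInf_le (OrderBot.bddBelow _) (⟨T, hT⟩ : {T : Set Ω // IsTransversal g T})

theorem le_collapse {g : Ω → Ω} {c : Cardinal}
    (h : ∀ T, IsTransversal g T → c ≤ #(Tᶜ : Set Ω)) : c ≤ collapse g :=
  have : Nonempty {T : Set Ω // IsTransversal g T} :=
    (exists_isTransversal g).elim fun T hT => ⟨⟨T, hT⟩⟩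
  le_ciInf fun T => h T.1 T.2

theorem collapse_eq_zero_of_injective {g : Ω → Ω} (hg : g.Injective) : collapse g = 0 := by
  have hT : IsTransversal g Set.univ := ⟨hg.injOn, Set.image_univ⟩
  simpa using hT.collapse_le

theorem collapse_pos_of_not_injective {g : Ω → Ω} (hg : ¬ g.Injective) : 0 < collapse g := by
  refine lt_of_lt_of_le zero_lt_one (le_collapse fun T hT => ?_)
  refine Cardinal.one_le_iff_ne_zero.mpr (Cardinal.mk_ne_zero_iff.mpr ?_)
  by_contra! hTc
  rw [Set.isEmpty_coe_sort, Set.compl_empty_iff] at hTc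
  exact hg (Set.injOn_univ.mp (hTc ▸ hT.1))

theorem aleph0_le_collapse_of_infinite_preimage {g : Ω → Ω} {α : Ω}
    (hα : (g ⁻¹' {α}).Infinite) : ℵ₀ ≤ collapse g := by
  refine le_collapse fun T hT => aleph0_le_mk_iff_infinite.mpr ?_
  exact (hα.sdiff (subsingleton_preimage_inter_of_injOn hT.1 α).finite).mono
    fun x hx hxT => hx.2 ⟨hx.1, hxT⟩

theorem defect_eq_zero_iff {g : Ω → Ω} : defect g = 0 ↔ g.Surjective := by
  rw [defect, Cardinal.mk_set_eq_zero_iff, Set.compl_empty_iff, Set.range_eq_univ]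

theorem contract_lt_aleph0_of_injOn {g : Ω → Ω} {T : Set Ω} (hg : Set.InjOn g T)
    (hT : Tᶜ.Finite) : contract g < ℵ₀ := by
  refine Cardinal.lt_aleph0_iff_set_finite.mpr (Set.finite_empty.subset fun α hα => hα ?_)
  refine ((subsingleton_preimage_inter_of_injOn hg α).finite.union hT).subset fun x hx => ?_
  by_cases hxT : x ∈ T
  exacts [Or.inl ⟨hx, hxT⟩, Or.inr hxT]

theorem mem_S12345_of_bijective {g : Function.End Ω} (hg : g.Bijective) : g ∈ S12345 := by
  have hc := collapse_eq_zero_of_injective hg.1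
  have hd := defect_eq_zero_iff.mpr hg.2
  exact mem_S12345_iff.mpr ⟨contract_lt_aleph0_of_injOn (T := Set.univ) hg.1.injOn (by simp),
    iff_of_true hc hd, by rw [hc, hd]⟩

theorem mem_S12345_of_aleph0_le {g : Function.End Ω} (hk : contract g < ℵ₀)
    (hc : ℵ₀ ≤ collapse g) (hd : ℵ₀ ≤ defect g) : g ∈ S12345 :=
  mem_S12345_iff.mpr ⟨hk,
    iff_of_false (aleph0_pos.trans_le hc).ne' (aleph0_pos.trans_le hd).ne',
    iff_of_false hc.not_gt hd.not_gt⟩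

theorem exists_bijective_eqOn_comp {j w : Ω → Ω} {R : Set Ω} (hj : Set.InjOn j R)
    (hw : Set.InjOn w R) (h : #((j '' R)ᶜ : Set Ω) = #((w '' R)ᶜ : Set Ω)) :
    ∃ a : Function.End Ω, a.Bijective ∧ Set.EqOn (a ∘ j) w R := by
  classical
  obtain ⟨e⟩ := Cardinal.eq.mp h
  let a := Equiv.subtypeCongr
    ((Equiv.Set.imageOfInjOn j R hj).symm.trans (Equiv.Set.imageOfInjOn w R hw)) e
  refine ⟨⇑a, a.bijective, fun β hβ => ?_⟩
  have hjβ : (Equiv.Set.imageOfInjOn j R hj).symm ⟨j β, β, hβ, rfl⟩ = ⟨β, hβ⟩ :=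
    (Equiv.Set.imageOfInjOn j R hj).symm_apply_eq.mpr rfl
  simp only [a, Equiv.subtypeCongr, Equiv.coe_trans, Function.comp_apply,
    Equiv.sumCompl_symm_apply_of_pos (Set.mem_image_of_mem j hβ), Equiv.sumCongr_apply,
    Sum.map_inl, hjβ, Equiv.sumCompl_apply_inl]
  rfl

theorem exists_bijOn_of_mk_eq {S U : Set Ω} (h : #S = #U) : ∃ σ : Ω → Ω, Set.BijOn σ S U := by
  classical
  obtain ⟨e⟩ := Cardinal.eq.mp h
  let σ : Ω → Ω := fun y => if hy : y ∈ S then e ⟨y, hy⟩ else y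
  have hσ : ∀ x : S, σ x = e x := fun x => dif_pos x.2
  refine ⟨σ, fun x hx => hσ ⟨x, hx⟩ ▸ (e _).2, fun x hx y hy hxy => ?_,
    fun y hy => ⟨_, (e.symm ⟨y, hy⟩).2, ?_⟩⟩
  · rw [hσ ⟨x, hx⟩, hσ ⟨y, hy⟩] at hxy
    simpa using e.injective (Subtype.ext hxy)
  · rw [hσ (e.symm ⟨y, hy⟩), e.apply_symm_apply]

theorem exists_injective_range_subset [Countable Ω] {S : Set Ω} (hS : S.Infinite) :
    ∃ j : Ω → Ω, j.Injective ∧ Set.range j ⊆ S ∧ (Set.range j)ᶜ.Infinite := by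
  obtain ⟨ι, hι⟩ := exists_injective_nat Ω
  let A : ℕ → Ω := fun n => hS.natEmbedding _ n
  have hA : A.Injective := Subtype.val_injective.comp (hS.natEmbedding _).injective
  refine ⟨fun β => A (2 * ι β), fun β β' h => hι (by have := hA h; omega),
    fun _ ⟨β, hβ⟩ => hβ ▸ (hS.natEmbedding _ _).2, ?_⟩
  refine Set.infinite_of_injective_forall_mem (f := fun m => A (2 * m + 1))
    (fun m m' h => by have := hA h; omega) fun m ⟨β, hβ⟩ => ?_
  have := hA hβ
  omega

theorem exists_mem_S12345_mul_eq [Countable Ω] {u j f : Function.End Ω} {β₀ : Ω}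
    (hj : j.Injective) (hu : ∀ β, (u ⁻¹' {j β}).Infinite) (hf : (f ⁻¹' {β₀}).Infinite) :
    ∃ b ∈ S12345, u * b = j * f := by
  classical
  obtain ⟨ι, hι⟩ := exists_injective_nat Ω
  let p : Ω → ℕ → Ω := fun β m => (hu β).natEmbedding _ m
  have hup : ∀ β m, u (p β m) = j β := fun β m => ((hu β).natEmbedding _ m).2
  have hp : ∀ β, (p β).Injective := fun β =>
    Subtype.val_injective.comp ((hu β).natEmbedding _).injective
  let b : Function.End Ω := fun x => p (f x) (if f x = β₀ then 0 else ι x)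
  have hfb : ∀ {x β m}, b x = p β m → f x = β := fun {x β m} h =>
    hj ((hup _ _).symm.trans ((congrArg u h).trans (hup β m)))
  have hb₀ : ∀ {x}, f x = β₀ → b x = p β₀ 0 := fun {x} hx => by simp [b, hx]
  have hb : ∀ {x y}, b x = b y → x = y ∨ f x = β₀ := by
    intro x y h
    by_cases hx : f x = β₀
    · exact Or.inr hx
    · have hxy : f x = f y := hfb h
      change p (f x) _ = p (f y) _ at h
      rw [← hxy] at h
      simp only [if_neg hx] at h
      exact Or.inl (hι (hp _ h))
  refine ⟨b, mem_S12345_of_aleph0_le ?_ ?_ ?_, funext fun x => hup _ _⟩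
  · refine Cardinal.lt_aleph0_iff_set_finite.mpr ((Set.finite_singleton (p β₀ 0)).subset ?_)
    intro α hα
    obtain ⟨x, hx, y, hy, hxy⟩ := Set.Infinite.nontrivial hα
    rw [Set.mem_singleton_iff, ← hx, hb₀ ((hb (hx.trans hy.symm)).resolve_left hxy)]
  · exact aleph0_le_collapse_of_infinite_preimage (α := p β₀ 0) (hf.mono fun x hx => hb₀ hx)
  · refine aleph0_le_mk_iff_infinite.mpr ?_
    refine Set.infinite_of_injective_forall_mem (f := fun m => p β₀ (m + 1))
      (fun m m' h => by have := hp β₀ h; omega) fun m ⟨x, hx⟩ => ?_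
    have := hp β₀ ((hb₀ (hfb hx)).symm.trans hx)
    omega

theorem IsTransversal.mem_S12345 {g : Function.End Ω} {T : Set Ω} (hT : IsTransversal g T)
    (hTc : Tᶜ.Finite) (hTne : Tᶜ.Nonempty) (hd : (Set.range g)ᶜ.Finite)
    (hdne : (Set.range g)ᶜ.Nonempty) : g ∈ S12345 := by
  have hc : collapse g ≠ 0 := by
    refine (collapse_pos_of_not_injective fun hinj => ?_).ne'
    obtain ⟨x, hx⟩ := hTne
    obtain ⟨y, hy, hyx⟩ : g x ∈ g '' T := hT.2 ▸ Set.mem_range_self x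
    exact hx (hinj hyx ▸ hy)
  refine mem_S12345_iff.mpr ⟨contract_lt_aleph0_of_injOn hT.1 hTc,
    iff_of_false hc (Cardinal.mk_ne_zero_iff.mpr hdne.to_subtype), iff_of_true ?_ ?_⟩
  · exact hT.collapse_le.trans_lt (Cardinal.lt_aleph0_iff_set_finite.mpr hTc)
  · exact Cardinal.lt_aleph0_iff_set_finite.mpr hd

theorem exists_mem_S12345_leftInvOn {h : Ω → Ω} {R : Set Ω} (hh : Set.InjOn h R)
    (hR : R.Nonempty) (hRc : Rᶜ.Finite) (hRne : Rᶜ.Nonempty) (hD : (h '' R)ᶜ.Finite)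
    (hDne : (h '' R)ᶜ.Nonempty) : ∃ m ∈ S12345, Set.LeftInvOn m h R := by
  classical
  obtain ⟨r₀, hr₀⟩ := hR
  have : Nonempty Ω := ⟨r₀⟩
  let m : Function.End Ω := fun y => if y ∈ h '' R then Function.invFunOn h R y else r₀
  have hm : Set.LeftInvOn m h R := fun x hx => by
    simp only [m, if_pos (Set.mem_image_of_mem h hx), hh.leftInvOn_invFunOn hx]
  have hrange : Set.range m = R := by
    refine subset_antisymm ?_ fun x hx => ⟨h x, hm hx⟩
    rintro _ ⟨y, rfl⟩
    by_cases hy : y ∈ h '' R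
    · simpa only [m, if_pos hy] using Function.invFunOn_mem hy
    · simpa only [m, if_neg hy] using hr₀
  have hT : IsTransversal m (h '' R) := by
    refine ⟨?_, ?_⟩
    · rintro _ ⟨x, hx, rfl⟩ _ ⟨y, hy, rfl⟩ hxy
      rw [hm hx, hm hy] at hxy
      rw [hxy]
    · rw [hrange, ← Set.image_comp]
      exact (Set.image_congr hm).trans (Set.image_id' R)
  exact ⟨m, hT.mem_S12345 hD hDne (hrange ▸ hRc) (hrange ▸ hRne), hm⟩

theorem exists_injOn_of_aleph0_le_collapse [Infinite Ω] {v : Ω → Ω} (hcv : ℵ₀ ≤ collapse v)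
    (hdv : defect v < ℵ₀) : ∃ D : Set Ω, D.Infinite ∧ Dᶜ.Infinite ∧ Set.InjOn v D ∧
      (v '' D)ᶜ.Finite ∧ (v '' D)ᶜ.Nonempty := by
  obtain ⟨T, hT⟩ := exists_isTransversal v
  have hvc : (Set.range v)ᶜ.Finite := Cardinal.lt_aleph0_iff_set_finite.mp hdv
  have hTinf : T.Infinite := Set.Infinite.of_image v (by simpa [hT.2] using hvc.infinite_compl)
  obtain ⟨x₀, hx₀⟩ := hTinf.nonempty
  have hcompl : (v '' (T \ {x₀}))ᶜ = {v x₀} ∪ (Set.range v)ᶜ := by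
    rw [hT.1.image_sdiff_subset (Set.singleton_subset_iff.mpr hx₀), hT.2, Set.image_singleton,
      Set.compl_sdiff]
  refine ⟨T \ {x₀}, hTinf.sdiff (Set.finite_singleton x₀), ?_, hT.1.mono Set.sdiff_subset, ?_, ?_⟩
  · exact (aleph0_le_mk_iff_infinite.mp (hcv.trans hT.collapse_le)).mono
      (Set.compl_subset_compl.mpr Set.sdiff_subset)
  · exact hcompl ▸ (Set.finite_singleton _).union hvc
  · exact hcompl ▸ ⟨v x₀, Or.inl rfl⟩

section Generation

variable (M : Subsemigroup (Function.End Ω))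

theorem mul_mem_of_aleph0_le_contract [Countable Ω] {u f w : Function.End Ω} {β₀ : Ω}
    (hS : S12345 ⊆ (M : Set (Function.End Ω))) (hu : u ∈ M) (hku : ℵ₀ ≤ contract u)
    (hf : (f ⁻¹' {β₀}).Infinite) (hw : Set.InjOn w (Set.range f))
    (hw' : (w '' Set.range f)ᶜ.Infinite) : w * f ∈ M := by
  obtain ⟨j, hj, hjK, hjc⟩ := exists_injective_range_subset (aleph0_le_mk_iff_infinite.mp hku)
  obtain ⟨b, hb, hub⟩ := exists_mem_S12345_mul_eq hj (fun β => hjK ⟨β, rfl⟩) hf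
  have hjc' : (j '' Set.range f)ᶜ.Infinite :=
    hjc.mono (Set.compl_subset_compl.mpr (Set.image_subset_range j _))
  obtain ⟨a, ha, haj⟩ := exists_bijective_eqOn_comp hj.injOn hw
    (by rw [hjc'.mk_eq_aleph0, hw'.mk_eq_aleph0])
  have hwf : w * f = a * u * b := funext fun x => by
    change w (f x) = a ((u * b) x)
    rw [hub]
    exact (haj ⟨x, rfl⟩).symm
  rw [hwf]
  exact mul_mem (mul_mem (hS (mem_S12345_of_bijective ha)) hu) (hS hb)

theorem mem_of_aleph0_le_defect [Countable Ω] {u f : Function.End Ω} {β₀ : Ω}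
    (hS : S12345 ⊆ (M : Set (Function.End Ω))) (hu : u ∈ M) (hku : ℵ₀ ≤ contract u)
    (hf : (f ⁻¹' {β₀}).Infinite) (hdf : ℵ₀ ≤ defect f) : f ∈ M := by
  have hRc : (Set.range f)ᶜ.Infinite := aleph0_le_mk_iff_infinite.mp hdf
  exact mul_mem_of_aleph0_le_contract M hS (w := 1) hu hku hf (Set.injOn_id _)
    (by rwa [← Set.image_id (Set.range f)] at hRc)

theorem mem_of_defect_pos_of_lt_aleph0 [Countable Ω] [Infinite Ω] {u v f : Function.End Ω}
    {β₀ : Ω} (hS : S12345 ⊆ (M : Set (Function.End Ω))) (hu : u ∈ M) (hv : v ∈ M)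
    (hku : ℵ₀ ≤ contract u) (hcv : ℵ₀ ≤ collapse v) (hdv : defect v < ℵ₀)
    (hf : (f ⁻¹' {β₀}).Infinite) (hdf : 0 < defect f) (hdf' : defect f < ℵ₀) : f ∈ M := by
  obtain ⟨D, hD, hDc, hvD, hvDc, hvDne⟩ := exists_injOn_of_aleph0_le_collapse hcv hdv
  have hRc : (Set.range f)ᶜ.Finite := Cardinal.lt_aleph0_iff_set_finite.mp hdf'
  have hR : (Set.range f).Infinite := by simpa using hRc.infinite_compl
  obtain ⟨σ, hσ⟩ : ∃ σ : Function.End Ω, Set.BijOn σ (Set.range f) D :=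
    exists_bijOn_of_mk_eq (by rw [hR.mk_eq_aleph0, hD.mk_eq_aleph0])
  have hσf : σ * f ∈ M := mul_mem_of_aleph0_le_contract M hS hu hku hf hσ.injOn (hσ.image_eq ▸ hDc)
  have himage : (v * σ) '' Set.range f = v '' D := by
    rw [← hσ.image_eq]
    exact (Set.image_image v σ _).symm
  obtain ⟨m, hm, hmv⟩ := exists_mem_S12345_leftInvOn (hvD.comp hσ.injOn hσ.mapsTo)
    (Set.range_nonempty f) hRc (Set.nonempty_coe_sort.mp (Cardinal.mk_ne_zero_iff.mp hdf.ne'))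
    (himage ▸ hvDc) (himage ▸ hvDne)
  have hfeq : f = m * v * (σ * f) := funext fun x => (hmv ⟨x, rfl⟩).symm
  rw [hfeq]
  exact mul_mem (mul_mem (hS hm) hv) hσf

theorem mem_of_defect_pos [Countable Ω] [Infinite Ω] {u v f : Function.End Ω} {β₀ : Ω}
    (hS : S12345 ⊆ (M : Set (Function.End Ω))) (hu : u ∈ M) (hv : v ∈ M)
    (hku : ℵ₀ ≤ contract u) (hcv : ℵ₀ ≤ collapse v) (hdv : defect v < ℵ₀)
    (hf : (f ⁻¹' {β₀}).Infinite) (hdf : 0 < defect f) : f ∈ M := by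
  rcases lt_or_ge (defect f) ℵ₀ with hdf' | hdf'
  · exact mem_of_defect_pos_of_lt_aleph0 M hS hu hv hku hcv hdv hf hdf hdf'
  · exact mem_of_aleph0_le_defect M hS hu hku hf hdf'

end Generation

theorem isTransversal_range_surjInv {g : Ω → Ω} (hg : g.Surjective) :
    IsTransversal g (Set.range (Function.surjInv hg)) := by
  refine ⟨?_, ?_⟩
  · rintro _ ⟨a, rfl⟩ _ ⟨b, rfl⟩ hab
    rw [Function.surjInv_eq hg, Function.surjInv_eq hg] at hab
    rw [hab]
  · rw [← Set.range_comp, hg.range_eq]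
    exact Set.range_eq_univ.mpr fun b => ⟨b, Function.surjInv_eq hg b⟩

theorem stmt14 (Ω : Type) [Countable Ω] [Infinite Ω] (u v t f : Function.End Ω)
    (hku : ℵ₀ ≤ contract u) (hkf : ℵ₀ ≤ contract f)
    (hcv : ℵ₀ ≤ collapse v) (hdv : defect v < ℵ₀)
    (hct : 0 < collapse t) (hdt : defect t = 0) :
    f ∈ Subsemigroup.closure (S12345 ∪ {u, v, t}) := by
  set C := Subsemigroup.closure (S12345 ∪ {u, v, t})
  have hS : S12345 ⊆ (C : Set (Function.End Ω)) := fun g hg => Subsemigroup.subset_closure (.inl hg)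
  have hu : u ∈ C := Subsemigroup.subset_closure (by simp)
  have hv : v ∈ C := Subsemigroup.subset_closure (by simp)
  have ht : t ∈ C := Subsemigroup.subset_closure (by simp)
  obtain ⟨β₀, hβ₀⟩ := (aleph0_le_mk_iff_infinite.mp hkf).nonempty
  rcases eq_or_ne (defect f) 0 with hdf | hdf
  · have ht' : t.Surjective := defect_eq_zero_iff.mp hdt
    set s : Function.End Ω := Function.surjInv ht'
    have hfs : f = t * (s * f) := funext fun x => (Function.surjInv_eq ht' (f x)).symm
    have hsf : ((s * f) ⁻¹' {s β₀}).Infinite := by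
      convert hβ₀ using 2
      ext x
      exact (Function.injective_surjInv ht').eq_iff
    have hdsf : 0 < defect (s * f) := by
      change 0 < #((Set.range (s ∘ f))ᶜ : Set Ω)
      rw [(defect_eq_zero_iff.mp hdf).range_comp]
      exact hct.trans_le (isTransversal_range_surjInv ht').collapse_le
    rw [hfs]
    exact mul_mem ht (mem_of_defect_pos C hS hu hv hku hcv hdv hsf hdsf)
  · exact mem_of_defect_pos C hS hu hv hku hcv hdv hβ₀ (pos_iff_ne_zero.mpr hdf)
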